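/- For the ECA rule 8, with local rule h(a,b,c) = ¬a ∧ b ∧ c, and for every n ≥ 5: the number of distinct asynchronous global functions, i.e. the cardinality of { f^{(τ)} : τ a block-sequential update schedule on ℤ/nℤ }, equals L(2n) − 2^n, where L is the Lucas sequence (L(0) = 2, L(1) = 1, L(k+2) = L(k+1) + L(k)); equivalently it equals φ^{2n} + φ^{−2n} − 2^n with φ = (1+√5)/2 the golden ratio. -/

import Mathlib

/-- One round of a block-sequential update: all cells of rank `k` are updated
simultaneously by the ECA local rule `h`, reading the current states. -/
def ecaStep (n : ℕ) (h : Bool → Bool → Bool → Bool) (τ : ZMod n → ℕ) (k : ℕ)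
    (x : ZMod n → Bool) : ZMod n → Bool :=
  fun i => if τ i = k then h (x (i - 1)) (x i) (x (i + 1)) else x i

/-- State after processing ranks `0, 1, …, k` in increasing order. -/
def ecaUpTo (n : ℕ) (h : Bool → Bool → Bool → Bool) (τ : ZMod n → ℕ) :
    ℕ → (ZMod n → Bool) → ZMod n → Bool
  | 0 => ecaStep n h τ 0
  | k + 1 => fun x => ecaStep n h τ (k + 1) (ecaUpTo n h τ k x)

/-- Asynchronous global function `f^{(τ)}` for the block-sequential update
schedule `τ : ZMod n → ℕ` (rank of each cell): a cell keeps the value it gets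
in the round where it is updated (it is never updated again afterwards). -/
def ecaAsync (n : ℕ) (h : Bool → Bool → Bool → Bool) (τ : ZMod n → ℕ)
    (x : ZMod n → Bool) : ZMod n → Bool :=
  fun i => ecaUpTo n h τ (τ i) x i

/-- Synchronous global function of the ECA with local rule `h`. -/
def ecaSync (n : ℕ) (h : Bool → Bool → Bool → Bool) (x : ZMod n → Bool) :
    ZMod n → Bool :=
  fun i => h (x (i - 1)) (x i) (x (i + 1))

/-- Label of the arc `(i, j)` for schedule `τ`:
`true` = ⊕ (τ i ≥ τ j), `false` = ⊖ (τ i < τ j). -/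
def lab (n : ℕ) (τ : ZMod n → ℕ) (i j : ZMod n) : Bool :=
  decide (τ j ≤ τ i)

/-- The Lucas sequence: L(0)=2, L(1)=1, L(k+2)=L(k+1)+L(k). -/
def lucas : ℕ → ℕ
  | 0 => 2
  | 1 => 1
  | k + 2 => lucas (k + 1) + lucas k

/-!
A cell `i` updated after its right neighbour always becomes `false`: that neighbour can only
have become `true` if `x i` was `false`. Otherwise the new value of `i` depends only on the
length `k` of the strictly increasing run of ranks ending at `i`, along which rule 8 is applied
in a chain. Hence `f^{(τ)}` depends only on the profile of `τ` (`none`, or the run length `k` at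
each cell), and for `n ≥ 5` different profiles give different functions, as configurations with at
most one `false` cell show.

A profile is determined by its shape: `none`, start of a run, or continuation of a run. The
shapes that occur are the cyclic words over these three letters with no continuation right after
a `none`, except the word of `none`s and the `2 ^ n - 1` words without `none` other than the
constant word of starts. A `3 × 3` transfer matrix with nonzero eigenvalues `φ ^ 2`, `φ ^ (-2)`
counts the words with no continuation after a `none`: there are `L(2n)` of them.
-/

section

variable {n : ℕ}

theorem ecaUpTo_apply (h : Bool → Bool → Bool → Bool) (τ : ZMod n → ℕ) (k : ℕ)
    (x : ZMod n → Bool) (j : ZMod n) :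
    ecaUpTo n h τ k x j = if τ j ≤ k then ecaAsync n h τ x j else x j := by
  induction k with
  | zero =>
    by_cases h0 : τ j = 0
    · simp [ecaAsync, h0]
    · simp [ecaUpTo, ecaStep, h0]
  | succ k ih =>
    by_cases hj : τ j = k + 1
    · simp [ecaAsync, hj]
    · have hstep : ecaUpTo n h τ (k + 1) x j = ecaUpTo n h τ k x j := by
        simp [ecaUpTo, ecaStep, hj]
      rw [hstep, ih]
      split_ifs <;> first | rfl | omega

theorem ecaAsync_apply (h : Bool → Bool → Bool → Bool) (τ : ZMod n → ℕ)
    (x : ZMod n → Bool) (i : ZMod n) :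
    ecaAsync n h τ x i =
      h (if τ (i - 1) < τ i then ecaAsync n h τ x (i - 1) else x (i - 1)) (x i)
        (if τ (i + 1) < τ i then ecaAsync n h τ x (i + 1) else x (i + 1)) := by
  rcases hk : τ i with _ | k
  · simp [ecaAsync, hk, ecaUpTo, ecaStep]
  · change ecaUpTo n h τ (τ i) x i = _
    simp [hk, ecaUpTo, ecaStep, ecaUpTo_apply _ _ k]

theorem ZMod.forall_of_imp_add_one [NeZero n] {P : ZMod n → Prop}
    (hP : ∀ i, P i → P (i + 1)) {a : ZMod n} (ha : P a) (b : ZMod n) : P b := by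
  have key : ∀ m : ℕ, P (a + m) := by
    intro m
    induction m with
    | zero => simpa using ha
    | succ m ih => simpa [add_assoc] using hP _ ih
  simpa using key (b - a).val

theorem ZMod.natCast_ne_zero_of_lt {m : ℕ} (h0 : 0 < m) (hm : m < n) : (m : ZMod n) ≠ 0 := by
  rw [Ne, ZMod.natCast_eq_zero_iff]
  exact fun h => absurd (Nat.le_of_dvd h0 h) (by omega)

theorem ZMod.add_one_add_natCast_sub_one [NeZero n] (i : ZMod n) :
    i + 1 + ((n - 1 : ℕ) : ZMod n) = i := by
  push_cast [Nat.cast_sub NeZero.one_le]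
  simp

theorem Nat.decide_succ_mod_two_eq_one (k : ℕ) :
    decide ((k + 1) % 2 = 1) = !decide (k % 2 = 1) := by
  rcases Nat.mod_two_eq_zero_or_one k with h | h <;> simp [h, Nat.succ_mod_two_eq_one_iff]

theorem lucas_add_four (j : ℕ) : lucas (j + 4) + lucas j = 3 * lucas (j + 2) := by
  simp only [lucas]
  omega

open Real goldenRatio in
theorem lucas_eq_goldenRatio_pow_add_goldenConj_pow : ∀ j, (lucas j : ℝ) = φ ^ j + ψ ^ j
  | 0 => by norm_num [lucas]
  | 1 => by simp [lucas, goldenRatio_add_goldenConj]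
  | j + 2 => by
    rw [lucas, Nat.cast_add, lucas_eq_goldenRatio_pow_add_goldenConj_pow (j + 1),
      lucas_eq_goldenRatio_pow_add_goldenConj_pow j, pow_add φ j 2, pow_add ψ j 2,
      goldenRatio_sq, goldenConj_sq]
    ring

namespace Matrix

variable {α R : Type*} [Fintype α] [DecidableEq α] [CommSemiring R]

theorem pow_succ_apply_eq_sum_prod (M : Matrix α α R) (m : ℕ) (a b : α) :
    (M ^ (m + 1)) a b =
      ∑ s : Fin m → α, ∏ i : Fin (m + 1),
        M (Fin.cons (α := fun _ => α) a s i) (Fin.snoc (α := fun _ => α) s b i) := by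
  induction m generalizing a with
  | zero => simp [Fin.snoc]
  | succ m ih =>
    rw [pow_succ', mul_apply, ← (Fin.consEquiv fun _ => α).sum_comp, Fintype.sum_prod_type]
    refine Finset.sum_congr rfl fun c _ => ?_
    rw [ih, Finset.mul_sum]
    refine Finset.sum_congr rfl fun t _ => ?_
    change _ = ∏ i : Fin (m + 2), M (Fin.cons (α := fun _ => α) a (Fin.cons c t) i)
      (Fin.snoc (α := fun _ => α) (Fin.cons (α := fun _ => α) c t) b i)
    simp only [← Fin.cons_snoc_eq_snoc_cons, Fin.prod_univ_succ, Fin.cons_zero, Fin.cons_succ]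

theorem trace_pow_succ_eq_sum_prod (M : Matrix α α R) (m : ℕ) :
    trace (M ^ (m + 1)) = ∑ s : Fin (m + 1) → α, ∏ i, M (s i) (s (i + 1)) := by
  simp only [trace, diag, pow_succ_apply_eq_sum_prod, Fin.snoc_eq_cons_rotate, finRotate_apply]
  rw [← (Fin.consEquiv fun _ => α).sum_comp, Fintype.sum_prod_type]
  rfl

theorem sum_prod_eq_trace_pow [NeZero n] (M : Matrix α α R) :
    ∑ s : ZMod n → α, ∏ e, M (s e) (s (e + 1)) = trace (M ^ n) := by
  obtain ⟨m, rfl⟩ : ∃ m, n = m + 1 := Nat.exists_eq_succ_of_ne_zero (NeZero.ne n)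
  exact (M.trace_pow_succ_eq_sum_prod m).symm

end Matrix

namespace Rule8

def rule8 (a b c : Bool) : Bool := !a && b && c

def ascentLength (τ : ZMod n → ℕ) (i : ZMod n) : ℕ :=
  if h : τ (i - 1) < τ i then ascentLength τ (i - 1) + 1 else 0
termination_by τ i

theorem ascentLength_of_lt {τ : ZMod n → ℕ} {i : ZMod n} (h : τ (i - 1) < τ i) :
    ascentLength τ i = ascentLength τ (i - 1) + 1 := by
  rw [ascentLength, dif_pos h]

theorem ascentLength_of_not_lt {τ : ZMod n → ℕ} {i : ZMod n} (h : ¬τ (i - 1) < τ i) :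
    ascentLength τ i = 0 := by
  rw [ascentLength, dif_neg h]

/-- `none` marks a cell whose right neighbour is updated strictly before it; otherwise the
cell records the length of the strictly increasing run of ranks ending at it. -/
def profile (τ : ZMod n → ℕ) (i : ZMod n) : Option ℕ :=
  if τ (i + 1) < τ i then none else some (ascentLength τ i)

/-- The value at `i` of rule 8 updated along a chain: the cells `i - k, …, i` are updated one
after the other, each reading the new value of its left neighbour. -/
def chainUpdate : ℕ → (ZMod n → Bool) → ZMod n → Bool
  | 0, x, i => rule8 (x (i - 1)) (x i) (x (i + 1))
  | k + 1, x, i => rule8 (chainUpdate k x (i - 1)) (x i) (x (i + 1))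

def evalProfile (σ : ZMod n → Option ℕ) (x : ZMod n → Bool) (i : ZMod n) : Bool :=
  (σ i).elim false fun k => chainUpdate k x i

/-- The right neighbour, updated first, becomes `true` only if cell `i` was `false`. -/
theorem ecaAsync_rule8_of_lt (τ : ZMod n → ℕ) (x : ZMod n → Bool) {i : ZMod n}
    (h : τ (i + 1) < τ i) : ecaAsync n rule8 τ x i = false := by
  have h' : ¬τ (i + 1 - 1) < τ (i + 1) := by rw [add_sub_cancel_right]; omega
  rw [ecaAsync_apply, if_pos h, ecaAsync_apply _ _ _ (i + 1), if_neg h', add_sub_cancel_right]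
  cases x i <;> simp [rule8]

theorem ecaAsync_rule8 (τ : ZMod n → ℕ) : ecaAsync n rule8 τ = evalProfile (profile τ) := by
  funext x i
  induction hi : τ i using Nat.strong_induction_on generalizing i with
  | _ r ih =>
  subst hi
  by_cases hR : τ (i + 1) < τ i
  · simp [ecaAsync_rule8_of_lt τ x hR, evalProfile, profile, hR]
  rw [ecaAsync_apply, if_neg hR]
  by_cases hL : τ (i - 1) < τ i
  · have hL' : ¬τ i < τ (i - 1) := by omega
    rw [if_pos hL, ih _ hL (i - 1) rfl]
    simp [evalProfile, profile, hR, hL', ascentLength_of_lt hL, chainUpdate]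
  · simp [evalProfile, profile, hR, hL, ascentLength_of_not_lt hL, chainUpdate]

structure IsProfile (σ : ZMod n → Option ℕ) : Prop where
  apply_sub_one : ∀ i k, σ i = some (k + 1) → σ (i - 1) = some k
  exists_ne_none : ∃ i, σ i ≠ none
  -- a schedule without descents to the right is constant
  exists_none_or_eq : (∃ i, σ i = none) ∨ σ = fun _ => some 0

theorem isProfile_profile [NeZero n] (τ : ZMod n → ℕ) : IsProfile (profile τ) where
  apply_sub_one i k h := by
    by_cases hR : τ (i + 1) < τ i
    · simp [profile, hR] at h
    by_cases hL : τ (i - 1) < τ i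
    · have hL' : ¬τ (i - 1 + 1) < τ (i - 1) := by rw [sub_add_cancel]; omega
      simp_all [profile, ascentLength_of_lt hL]
    · simp [profile, hR, ascentLength_of_not_lt hL] at h
  exists_ne_none := by
    obtain ⟨i, -, hmin⟩ := Finset.exists_min_image Finset.univ τ ⟨0, Finset.mem_univ 0⟩
    exact ⟨i, by simp [profile, hmin]⟩
  exists_none_or_eq := by
    refine or_iff_not_imp_left.2 fun hne => ?_
    have hmono : ∀ i, τ i ≤ τ (i + 1) := fun i => by
      by_contra h
      exact hne ⟨i, by simp [profile]; omega⟩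
    have hconst : ∀ i j, τ i ≤ τ j := fun i =>
      ZMod.forall_of_imp_add_one (fun j h => h.trans (hmono j)) le_rfl
    funext i
    have hL : ¬τ (i - 1) < τ i := not_lt.2 (hconst i _)
    simp [profile, hconst, ascentLength_of_not_lt hL]

def punctured (p j : ZMod n) : Bool := decide (j ≠ p)

theorem punctured_sub_apply_self {m : ℕ} (hm : 0 < m) (hmn : m < n) (i : ZMod n) :
    punctured (i - (m : ZMod n)) i = true := by
  simpa [punctured, eq_sub_iff_add_eq] using ZMod.natCast_ne_zero_of_lt hm hmn

theorem punctured_sub_apply_add_one {m : ℕ} (hmn : m + 1 < n) (i : ZMod n) :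
    punctured (i - (m : ZMod n)) (i + 1) = true := by
  simp only [punctured, ne_eq, decide_eq_true_eq]
  intro h
  apply ZMod.natCast_ne_zero_of_lt (m := m + 1) (by omega) hmn
  push_cast
  linear_combination h

theorem chainUpdate_self {k : ℕ} {x : ZMod n → Bool} {i : ZMod n}
    (h : chainUpdate k x i = true) : x i = true := by
  cases k <;> simp_all [chainUpdate, rule8]

theorem chainUpdate_const_true (k : ℕ) (i : ZMod n) :
    chainUpdate k (fun _ => true) i = decide (k % 2 = 1) := by
  induction k generalizing i with
  | zero => simp [chainUpdate, rule8]
  | succ k ih => simp [chainUpdate, rule8, ih, Nat.decide_succ_mod_two_eq_one]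

/-- The hole at `i - m` is seen by the chain iff `m ≤ k + 1`; the values then alternate. -/
theorem chainUpdate_punctured {m : ℕ} (hm : 0 < m) (hmn : m + 2 ≤ n) (k : ℕ) (i : ZMod n) :
    chainUpdate k (punctured (i - (m : ZMod n))) i =
      if m ≤ k + 1 then decide (m % 2 = 1) else decide (k % 2 = 1) := by
  induction k generalizing m i with
  | zero =>
    have h1 : punctured (i - (m : ZMod n)) (i - 1) = decide (m ≠ 1) := by
      simp only [punctured, ne_eq, sub_right_inj, decide_eq_decide]
      rw [eq_comm, ← Nat.cast_one, ZMod.natCast_eq_natCast_iff', Nat.mod_eq_of_lt (by omega),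
        Nat.mod_eq_of_lt (by omega)]
    rw [chainUpdate, h1, punctured_sub_apply_self hm (by omega),
      punctured_sub_apply_add_one (by omega)]
    rcases (show m = 1 ∨ 2 ≤ m by omega) with rfl | hm2
    · simp [rule8]
    · simp [rule8, show m ≠ 1 by omega, show ¬m ≤ 1 by omega]
  | succ k ih =>
    rw [chainUpdate, punctured_sub_apply_self hm (by omega),
      punctured_sub_apply_add_one (by omega)]
    rcases (show m = 1 ∨ 2 ≤ m by omega) with rfl | hm2
    · have : chainUpdate k (punctured (i - 1)) (i - 1) = false :=
        Bool.eq_false_iff.2 fun h => by simpa [punctured] using chainUpdate_self h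
      simp [rule8, this]
    · have hshift : i - (m : ZMod n) = i - 1 - ((m - 1 : ℕ) : ZMod n) := by
        push_cast [Nat.cast_sub (by omega : 1 ≤ m)]
        ring
      rw [hshift, ih (by omega) (by omega)]
      by_cases hmk : m ≤ k + 2
      · have hm' : m = m - 1 + 1 := by omega
        simp [rule8, hmk, show m - 1 ≤ k + 1 by omega]
        rw [hm', Nat.decide_succ_mod_two_eq_one, Nat.add_sub_cancel, Bool.not_not]
      · simp [rule8, hmk, show ¬m - 1 ≤ k + 1 by omega, Nat.decide_succ_mod_two_eq_one]

theorem exists_chainUpdate_ne {k k' : ℕ} (hkk' : k < k')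
    (h : k + 5 ≤ n ∨ k % 2 ≠ k' % 2) (i : ZMod n) :
    ∃ x, chainUpdate k x i ≠ chainUpdate k' x i := by
  by_cases hpar : k % 2 = k' % 2
  · refine ⟨punctured (i - ((k + 3 : ℕ) : ZMod n)), ?_⟩
    have hk : k + 5 ≤ n := h.resolve_right (not_not.2 hpar)
    rw [chainUpdate_punctured (by omega) (by omega), chainUpdate_punctured (by omega) (by omega),
      if_neg (by omega), if_pos (by omega)]
    simp only [ne_eq, decide_eq_decide]
    omega
  · refine ⟨fun _ => true, ?_⟩
    simp only [chainUpdate_const_true, ne_eq, decide_eq_decide]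
    omega

variable {σ σ' : ZMod n → Option ℕ}

theorem IsProfile.apply_sub_natCast (hσ : IsProfile σ) {i : ZMod n} {k : ℕ}
    (h : σ i = some k) {t : ℕ} (ht : t ≤ k) : σ (i - t) = some (k - t) := by
  induction t with
  | zero => simpa using h
  | succ t ih =>
    have := hσ.apply_sub_one _ _ (show σ (i - t) = some (k - (t + 1) + 1) by
      rw [ih (by omega)]; congr 1; omega)
    simpa [sub_sub] using this

theorem IsProfile.add_two_le (hσ : IsProfile σ) (hn : 2 ≤ n) {i : ZMod n} {k : ℕ}
    (h : σ i = some k) : k + 2 ≤ n := by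
  have : NeZero n := ⟨by omega⟩
  rcases hσ.exists_none_or_eq with ⟨j, hj⟩ | rfl
  · by_contra hk
    have ht : (i - j).val ≤ k := by have := ZMod.val_lt (i - j); omega
    simpa [hj] using hσ.apply_sub_natCast h ht
  · cases h
    exact hn

theorem evalProfile_apply_of_eq_some {i : ZMod n} {k : ℕ} (h : σ i = some k)
    (x : ZMod n → Bool) : evalProfile σ x i = chainUpdate k x i := by
  simp [evalProfile, h]

theorem evalProfile_ne_of_eq_none (hn : 3 ≤ n) {i : ZMod n} {k : ℕ} (h : σ i = none)
    (h' : σ' i = some k) : evalProfile σ ≠ evalProfile σ' := by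
  intro heq
  have := congrFun (congrFun heq (punctured (i - ((1 : ℕ) : ZMod n)))) i
  rw [evalProfile_apply_of_eq_some h', chainUpdate_punctured one_pos (by omega)] at this
  simp [evalProfile, h] at this

/-- Ranks can only be confused when they are `n - 4` and `n - 2`; the left neighbours then
carry ranks `n - 5` and `n - 3`, which are told apart. -/
theorem evalProfile_ne_of_lt (hn : 5 ≤ n) (hσ : IsProfile σ) (hσ' : IsProfile σ')
    {i : ZMod n} {a b : ℕ} (ha : σ i = some a) (hb : σ' i = some b) (hab : a < b) :
    evalProfile σ ≠ evalProfile σ' := by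
  have hne : ∀ {j c d}, σ j = some c → σ' j = some d → c < d →
      (c + 5 ≤ n ∨ c % 2 ≠ d % 2) → evalProfile σ ≠ evalProfile σ' := by
    intro j c d hc hd hcd hcd' heq
    obtain ⟨x, hx⟩ := exists_chainUpdate_ne hcd hcd' j
    apply hx
    rw [← evalProfile_apply_of_eq_some hc, ← evalProfile_apply_of_eq_some hd, heq]
  by_cases hab' : a + 5 ≤ n ∨ a % 2 ≠ b % 2
  · exact hne ha hb hab hab'
  · have hb2 := hσ'.add_two_le (by omega) hb
    exact hne (hσ.apply_sub_natCast ha (t := 1) (by omega))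
      (hσ'.apply_sub_natCast hb (t := 1) (by omega)) (by omega) (Or.inl (by omega))

theorem evalProfile_injOn (hn : 5 ≤ n) :
    Set.InjOn evalProfile {σ : ZMod n → Option ℕ | IsProfile σ} := by
  intro σ hσ σ' hσ' heq
  funext i
  rcases h : σ i with _ | a <;> rcases h' : σ' i with _ | b
  · rfl
  · exact absurd heq (evalProfile_ne_of_eq_none (by omega) h h')
  · exact absurd heq.symm (evalProfile_ne_of_eq_none (by omega) h' h)
  · rcases lt_trichotomy a b with hab | rfl | hab
    · exact absurd heq (evalProfile_ne_of_lt hn hσ hσ' h h' hab)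
    · rfl
    · exact absurd heq.symm (evalProfile_ne_of_lt hn hσ' hσ h' h hab)

def shape (σ : ZMod n → Option ℕ) (i : ZMod n) : Option Bool :=
  (σ i).map fun k => decide (k ≠ 0)

theorem shape_eq_none_iff {i : ZMod n} : shape σ i = none ↔ σ i = none := by
  simp [shape]

theorem shape_eq_some_false_iff {i : ZMod n} : shape σ i = some false ↔ σ i = some 0 := by
  rcases h : σ i with _ | _ | k <;> simp [shape, h]

theorem shape_eq_some_true_iff {i : ZMod n} :
    shape σ i = some true ↔ ∃ k, σ i = some (k + 1) := by
  rcases h : σ i with _ | _ | k <;> simp [shape, h]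

def shapes (n : ℕ) : Set (ZMod n → Option Bool) :=
  {w | (∀ i, ¬(w i = none ∧ w (i + 1) = some true)) ∧ (∃ i, w i ≠ none) ∧
    ((∃ i, w i = none) ∨ w = fun _ => some false)}

theorem IsProfile.shape_mem (hσ : IsProfile σ) : shape σ ∈ shapes n := by
  refine ⟨fun i ⟨h, h'⟩ => ?_, ?_, ?_⟩
  · obtain ⟨k, hk⟩ := shape_eq_some_true_iff.1 h'
    have := hσ.apply_sub_one _ _ hk
    rw [add_sub_cancel_right] at this
    simp [shape_eq_none_iff, this] at h
  · obtain ⟨i, hi⟩ := hσ.exists_ne_none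
    exact ⟨i, by simpa [shape_eq_none_iff] using hi⟩
  · rcases hσ.exists_none_or_eq with ⟨i, hi⟩ | rfl
    · exact Or.inl ⟨i, shape_eq_none_iff.2 hi⟩
    · exact Or.inr (funext fun i => by simp [shape])

/-- A run length `k + 1` at `i` forces `k` at `i - 1`, so the values of a profile are recovered
from its shape by induction on `k`. -/
theorem shape_injOn : Set.InjOn shape {σ : ZMod n → Option ℕ | IsProfile σ} := by
  intro σ hσ σ' hσ' heq
  have key : ∀ k i, σ i = some k → σ' i = some k := by
    intro k
    induction k with
    | zero => exact fun i h => shape_eq_some_false_iff.1 (heq ▸ shape_eq_some_false_iff.2 h)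
    | succ k ih =>
      intro i h
      obtain ⟨k', hk'⟩ := shape_eq_some_true_iff.1 (heq ▸ shape_eq_some_true_iff.2 ⟨k, h⟩)
      have := hσ'.apply_sub_one _ _ hk'
      rw [ih _ (hσ.apply_sub_one _ _ h), Option.some_inj] at this
      rwa [← this] at hk'
  funext i
  rcases h : σ i with _ | k
  · exact (shape_eq_none_iff.1 (heq ▸ shape_eq_none_iff.2 h)).symm
  · exact (key k i h).symm

theorem shape_profile_eq {w : ZMod n → Option Bool} {τ : ZMod n → ℕ}
    (hw : ∀ i, ¬(w i = none ∧ w (i + 1) = some true))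
    (hdesc : ∀ e, w e = none → τ (e + 1) < τ e)
    (hflat : ∀ e, w e ≠ none → w (e + 1) = some false → τ (e + 1) = τ e)
    (hasc : ∀ e, w e ≠ none → w (e + 1) ≠ some false → τ e < τ (e + 1)) :
    shape (profile τ) = w := by
  funext i
  rcases hi : w i with _ | b
  · simp [shape, profile, hdesc i hi]
  have hR : ¬τ (i + 1) < τ i := by
    by_cases h : w (i + 1) = some false
    · exact (hflat i (by simp [hi]) h).not_lt
    · exact not_lt.2 (hasc i (by simp [hi]) h).le
  have hL : τ (i - 1) < τ i ↔ b = true := by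
    have hdesc' := hdesc (i - 1)
    have hflat' := hflat (i - 1)
    have hasc' := hasc (i - 1)
    have hw' := hw (i - 1)
    simp only [sub_add_cancel, hi] at hdesc' hflat' hasc' hw'
    by_cases hprev : w (i - 1) = none
    · cases b <;> simp_all
      omega
    · cases b <;> simp_all
  by_cases h : τ (i - 1) < τ i
  · simp [shape, profile, hR, ascentLength_of_lt h, hL.1 h]
  · simp [shape, profile, hR, ascentLength_of_not_lt h, hL.not.1 h]

def rankWalk (n : ℕ) (u : ℕ → Option Bool) : ℕ → ℕ
  | 0 => n
  | m + 1 =>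
    if u m = none then rankWalk n u m - 1
    else if u (m + 1) = some false then rankWalk n u m
    else rankWalk n u m + n

theorem le_rankWalk_add (u : ℕ → Option Bool) (m : ℕ) : n ≤ rankWalk n u m + m := by
  induction m with
  | zero => simp [rankWalk]
  | succ m ih =>
    simp only [rankWalk]
    split_ifs <;> omega

/-- Ranks realising the shape `w`, obtained by walking once around the cycle from `i₀ + 1`. -/
def cycleRank (i₀ : ZMod n) (w : ZMod n → Option Bool) (e : ZMod n) : ℕ :=
  rankWalk n (fun p => w (i₀ + 1 + p)) (e - (i₀ + 1)).val

theorem cycleRank_add_natCast (i₀ : ZMod n) (w : ZMod n → Option Bool) {p : ℕ} (hp : p < n) :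
    cycleRank i₀ w (i₀ + 1 + p) = rankWalk n (fun p => w (i₀ + 1 + p)) p := by
  simp [cycleRank, ZMod.val_natCast_of_lt hp]

theorem cycleRank_add_one [NeZero n] {i₀ e : ZMod n} (w : ZMod n → Option Bool)
    (he : e ≠ i₀) :
    2 ≤ cycleRank i₀ w e ∧ cycleRank i₀ w (e + 1) =
      if w e = none then cycleRank i₀ w e - 1
      else if w (e + 1) = some false then cycleRank i₀ w e else cycleRank i₀ w e + n := by
  obtain ⟨p, hp, rfl⟩ : ∃ p, p + 1 < n ∧ i₀ + 1 + (p : ZMod n) = e := by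
    refine ⟨(e - (i₀ + 1)).val, lt_of_le_of_ne (ZMod.val_lt _) fun hp => he ?_, by simp⟩
    rw [← ZMod.add_one_add_natCast_sub_one i₀, ← show (e - (i₀ + 1)).val = n - 1 by omega]
    simp
  have := le_rankWalk_add (n := n) (fun p => w (i₀ + 1 + p)) p
  rw [show i₀ + 1 + (p : ZMod n) + 1 = i₀ + 1 + ((p + 1 : ℕ) : ZMod n) by push_cast; ring,
    cycleRank_add_natCast _ _ (by omega), cycleRank_add_natCast _ _ hp]
  exact ⟨by omega, rfl⟩

/-- The walk never drops below `n - p` after `p` steps, and its last step, from `i₀ - 1` (not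
`none`) into `i₀` (`none`), adds `n`: so the cycle closes with a descent at `i₀`. -/
theorem cycleRank_add_one_lt (hn : 2 ≤ n) {i₀ : ZMod n} {w : ZMod n → Option Bool}
    (hprev : w (i₀ - 1) ≠ none) (hi₀ : w i₀ = none) :
    cycleRank i₀ w (i₀ + 1) < cycleRank i₀ w i₀ := by
  have : NeZero n := ⟨by omega⟩
  have hpred : i₀ + 1 + ((n - 2 : ℕ) : ZMod n) = i₀ - 1 := by
    push_cast [Nat.cast_sub hn]
    simp; ring
  have hlast : i₀ + 1 + ((n - 2 + 1 : ℕ) : ZMod n) = i₀ := by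
    rw [show n - 2 + 1 = n - 1 by omega, ZMod.add_one_add_natCast_sub_one]
  have h0 := cycleRank_add_natCast i₀ w (p := 0) (by omega)
  have h1 := cycleRank_add_natCast i₀ w (p := n - 2 + 1) (by omega)
  have := le_rankWalk_add (n := n) (fun p => w (i₀ + 1 + p)) (n - 2)
  rw [Nat.cast_zero, add_zero] at h0
  rw [hlast] at h1
  simp only [h0, h1, rankWalk, hpred, hprev, hlast, hi₀, reduceCtorEq, if_false]
  omega

theorem exists_shape_profile_eq_of_eq_none (hn : 2 ≤ n) {w : ZMod n → Option Bool}
    (hw : ∀ i, ¬(w i = none ∧ w (i + 1) = some true)) {i₀ : ZMod n}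
    (hprev : w (i₀ - 1) ≠ none) (hi₀ : w i₀ = none) :
    ∃ τ : ZMod n → ℕ, shape (profile τ) = w := by
  have : NeZero n := ⟨by omega⟩
  have hne : ∀ {e}, w e ≠ none → e ≠ i₀ := fun he h => he (h ▸ hi₀)
  refine ⟨cycleRank i₀ w, shape_profile_eq hw (fun e he => ?_) (fun e he he' => ?_)
    (fun e he he' => ?_)⟩
  · by_cases h : e = i₀
    · rw [h]
      exact cycleRank_add_one_lt hn hprev hi₀
    · obtain ⟨h2, h3⟩ := cycleRank_add_one w h
      rw [h3, if_pos he]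
      omega
  · rw [(cycleRank_add_one w (hne he)).2, if_neg he, if_pos he']
  · rw [(cycleRank_add_one w (hne he)).2, if_neg he, if_neg he']
    omega

theorem exists_shape_profile_eq (hn : 2 ≤ n) {w : ZMod n → Option Bool} (hw : w ∈ shapes n) :
    ∃ τ : ZMod n → ℕ, shape (profile τ) = w := by
  have : NeZero n := ⟨by omega⟩
  rcases hw.2.2 with ⟨i, hi⟩ | rfl
  · obtain ⟨i₀, hprev, hi₀⟩ : ∃ i₀, w (i₀ - 1) ≠ none ∧ w i₀ = none := by
      by_contra! h
      obtain ⟨j, hj⟩ := hw.2.1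
      exact ZMod.forall_of_imp_add_one (P := fun i => w i ≠ none)
        (fun i hi => h (i + 1) (by simpa using hi)) hj i hi
    exact exists_shape_profile_eq_of_eq_none hn hw.1 hprev hi₀
  · refine ⟨fun _ => 0, funext fun i => ?_⟩
    simp [shape, profile, ascentLength_of_not_lt]

theorem image_shape_range_profile (hn : 2 ≤ n) :
    shape '' Set.range (profile (n := n)) = shapes n := by
  have : NeZero n := ⟨by omega⟩
  ext w
  constructor
  · rintro ⟨_, ⟨τ, rfl⟩, rfl⟩
    exact (isProfile_profile τ).shape_mem
  · intro hw
    obtain ⟨τ, hτ⟩ := exists_shape_profile_eq hn hw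
    exact ⟨_, ⟨τ, rfl⟩, hτ⟩

open Matrix

def shapeTransfer : Matrix (Option Bool) (Option Bool) ℕ :=
  Matrix.of fun a b => if a = none ∧ b = some true then 0 else 1

/-- Cayley–Hamilton: the characteristic polynomial is `X ^ 3 - 3 * X ^ 2 + X`. -/
theorem shapeTransfer_pow_three : shapeTransfer ^ 3 + shapeTransfer = 3 • shapeTransfer ^ 2 := by
  ext a b
  rcases a with _ | _ | _ <;> rcases b with _ | _ | _ <;>
    simp [shapeTransfer, pow_succ, mul_apply, Fintype.sum_option]

theorem trace_shapeTransfer_pow_succ (k : ℕ) :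
    trace (shapeTransfer ^ (k + 1)) = lucas (2 * k + 2) := by
  induction k using Nat.strong_induction_on with
  | _ k ih =>
  match k, ih with
  | 0, _ => simp [shapeTransfer, trace, Fintype.sum_option]; rfl
  | 1, _ => simp [shapeTransfer, trace, pow_succ, mul_apply, Fintype.sum_option]; rfl
  | k + 2, ih =>
    have h : shapeTransfer ^ (k + 3) + shapeTransfer ^ (k + 1) = 3 • shapeTransfer ^ (k + 2) := by
      rw [pow_add _ k 3, pow_add _ k 1, pow_one, pow_add _ k 2, ← mul_add,
        shapeTransfer_pow_three, mul_smul_comm]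
    have h' := congrArg trace h
    rw [trace_add, trace_smul, smul_eq_mul, ih k (by omega), ih (k + 1) (by omega)] at h'
    have hl := lucas_add_four (2 * k + 2)
    rw [show k + 2 + 1 = k + 3 by ring, show 2 * (k + 2) + 2 = 2 * k + 2 + 4 by ring]
    rw [show 2 * (k + 1) + 2 = 2 * k + 2 + 2 by ring] at h'
    omega

theorem ncard_setOf_forall_not_none_some_true [NeZero n] :
    {w : ZMod n → Option Bool | ∀ i, ¬(w i = none ∧ w (i + 1) = some true)}.ncard =
      lucas (2 * n) := by
  obtain ⟨k, rfl⟩ : ∃ k, n = k + 1 := Nat.exists_eq_succ_of_ne_zero (NeZero.ne n)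
  rw [Set.ncard_eq_toFinset_card', Set.toFinset_ofPred, Finset.card_filter,
    show 2 * (k + 1) = 2 * k + 2 by ring, ← trace_shapeTransfer_pow_succ,
    ← Matrix.sum_prod_eq_trace_pow]
  refine Finset.sum_congr rfl fun w _ => ?_
  rw [← Fintype.prod_boole]
  refine Finset.prod_congr rfl fun i _ => ?_
  by_cases h : w i = none ∧ w (i + 1) = some true <;> simp [shapeTransfer, h]

theorem shapes_union_range_some :
    shapes n ∪ Set.range (fun (b : ZMod n → Bool) i => some (b i)) =
      {w | ∀ i, ¬(w i = none ∧ w (i + 1) = some true)} \ {fun _ => none} := by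
  ext w
  simp only [Set.mem_union, Set.mem_sdiff, Set.mem_singleton_iff]
  constructor
  · rintro (⟨hw, ⟨i, hi⟩, -⟩ | ⟨b, rfl⟩)
    · exact ⟨hw, fun h => hi (congrFun h i)⟩
    · exact ⟨fun i h => by simp at h, fun h => by simpa using congrFun h 0⟩
  · rintro ⟨hw, hne⟩
    by_cases hnone : ∃ i, w i = none
    · refine Or.inl ⟨hw, ?_, Or.inl hnone⟩
      by_contra h
      exact hne (funext fun i => by simpa using not_exists.1 h i)
    · refine Or.inr ⟨fun i => (w i).getD false, funext fun i => ?_⟩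
      have := not_exists.1 hnone i
      cases h : w i <;> simp_all

theorem shapes_inter_range_some [NeZero n] :
    shapes n ∩ Set.range (fun (b : ZMod n → Bool) i => some (b i)) = {fun _ => some false} := by
  ext w
  simp only [Set.mem_inter_iff, Set.mem_singleton_iff]
  constructor
  · rintro ⟨⟨-, -, ⟨i, hi⟩ | hconst⟩, ⟨b, rfl⟩⟩
    · simp at hi
    · exact hconst
  · rintro rfl
    exact ⟨⟨fun i h => by simp at h, ⟨0, by simp⟩, Or.inr rfl⟩, fun _ => false, rfl⟩

theorem ncard_shapes_add_two_pow [NeZero n] : (shapes n).ncard + 2 ^ n = lucas (2 * n) := by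
  have hN : (Set.range fun (b : ZMod n → Bool) i => some (b i)).ncard = 2 ^ n := by
    rw [Set.ncard_range_of_injective fun b b' h => funext fun i => by simpa using congrFun h i]
    simp
  have h := Set.ncard_union_add_ncard_inter (shapes n)
    (Set.range fun (b : ZMod n → Bool) i => some (b i))
  rw [shapes_union_range_some, shapes_inter_range_some, Set.ncard_singleton, hN,
    Set.ncard_sdiff_singleton_add_one (by simp), ncard_setOf_forall_not_none_some_true] at h
  exact h.symm

end Rule8

end

open Real goldenRatio Rule8 in
/-- Rule 8 (h a b c = ¬a ∧ b ∧ c): the number of distinct asynchronous global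
functions equals $L(2n) - 2^n$, equivalently $φ^{2n} + φ^{-2n} - 2^n$ where
$φ$ is the golden ratio. -/
theorem rule_8_count (n : ℕ) (hn : 5 ≤ n) :
    {g | ∃ τ : ZMod n → ℕ, g = ecaAsync n (fun a b c => !a && b && c) τ}.ncard
        = lucas (2 * n) - 2 ^ n ∧
    ({g | ∃ τ : ZMod n → ℕ, g = ecaAsync n (fun a b c => !a && b && c) τ}.ncard : ℝ)
        = ((1 + Real.sqrt 5) / 2) ^ (2 * n)
          + (((1 + Real.sqrt 5) / 2)⁻¹) ^ (2 * n) - 2 ^ n := by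
  have : NeZero n := ⟨by omega⟩
  have hprof : Set.range (profile (n := n)) ⊆ {σ | IsProfile σ} := by
    rintro _ ⟨τ, rfl⟩
    exact isProfile_profile τ
  have hset : {g | ∃ τ : ZMod n → ℕ, g = ecaAsync n (fun a b c => !a && b && c) τ} =
      evalProfile '' Set.range profile := by
    change {g | ∃ τ, g = ecaAsync n rule8 τ} = _
    ext g
    simp [ecaAsync_rule8, eq_comm]
  have hcount : (evalProfile '' Set.range (profile (n := n))).ncard + 2 ^ n = lucas (2 * n) := by
    rw [((evalProfile_injOn hn).mono hprof).ncard_image, ← (shape_injOn.mono hprof).ncard_image,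
      image_shape_range_profile (by omega), ncard_shapes_add_two_pow]
  rw [hset, inv_goldenRatio, (even_two_mul n).neg_pow,
    ← lucas_eq_goldenRatio_pow_add_goldenConj_pow, ← hcount]
  exact ⟨by omega, by push_cast; ring⟩
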